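/- arXiv:1912.01787 — 2 statements merged into one kernel-verified Lean document; each statement's English description precedes it below -/
import Mathlib

section
/- For every integer n ≥ 1, let A_n be the 4×4 matrix with rows (−1−n, −1−n, 0, 0), (−n, −1−n, 0, 0), (0, 0, −1, 0), (0, 0, −1, −1). Then the symmetric matrix A_n + A_nᵀ, viewed as a real matrix, is negative definite; that is, for every nonzero vector x ∈ ℝ⁴ one has xᵀ (A_n + A_nᵀ) x < 0 (equivalently, −(A_n + A_nᵀ) is positive definite). -/
/-!
`A_n + A_nᵀ` is block diagonal, and completing squares in each `2 × 2` block gives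
`-xᵀ (A_n + A_nᵀ) x = (2n + 1)(x₀ + x₁)² + (x₂ + x₃)² + ‖x‖²`,
which is positive for `x ≠ 0` as soon as `2n + 1 ≥ 0`.
-/

open Matrix

namespace Matrix

variable {ι R : Type*} [Fintype ι] [CommRing R] [PartialOrder R] [IsOrderedAddMonoid R]
  [StarRing R] [TrivialStar R]

theorem posDef_neg_of_isSymm {S : Matrix ι ι R} (hS : S.IsSymm)
    (hneg : ∀ x : ι → R, x ≠ 0 → x ⬝ᵥ S *ᵥ x < 0) : (-S).PosDef := by
  refine posDef_iff_dotProduct_mulVec.mpr ⟨isHermitian_iff_isSymm.mpr hS.neg, fun x hx ↦ ?_⟩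
  rw [star_trivial, neg_mulVec, dotProduct_neg, neg_pos]
  exact hneg x hx

end Matrix

namespace SevenThreeFamily

/-- The Seifert matrix `A_n` of `K_n`, with the parameter `n` allowed to be any real `t`. -/
def seifertMatrix (t : ℝ) : Matrix (Fin 4) (Fin 4) ℝ :=
  !![-1 - t, -1 - t, 0, 0;
     -t, -1 - t, 0, 0;
     0, 0, -1, 0;
     0, 0, -1, -1]

theorem neg_dotProduct_add_transpose_mulVec (t : ℝ) (x : Fin 4 → ℝ) :
    -(x ⬝ᵥ (seifertMatrix t + (seifertMatrix t)ᵀ) *ᵥ x)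
      = (2 * t + 1) * (x 0 + x 1) ^ 2 + (x 2 + x 3) ^ 2 + x ⬝ᵥ x := by
  simp only [dotProduct, mulVec, seifertMatrix, Matrix.add_apply, of_apply, cons_val',
    cons_val_fin_one, transpose_apply, Fin.sum_univ_four, cons_val_zero, cons_val_one, cons_val]
  ring

theorem dotProduct_add_transpose_mulVec_neg {t : ℝ} (ht : -1 ≤ 2 * t) {x : Fin 4 → ℝ}
    (hx : x ≠ 0) : x ⬝ᵥ (seifertMatrix t + (seifertMatrix t)ᵀ) *ᵥ x < 0 := by
  have hnorm : 0 < x ⬝ᵥ x := by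
    simpa only [star_trivial] using dotProduct_star_self_pos_iff.mpr hx
  have hform := neg_dotProduct_add_transpose_mulVec t x
  nlinarith [mul_nonneg (by linarith : (0 : ℝ) ≤ 2 * t + 1) (sq_nonneg (x 0 + x 1)),
    sq_nonneg (x 2 + x 3)]

end SevenThreeFamily

/-- For every integer `n ≥ 1`, the symmetric matrix `A_n + A_nᵀ` (with `A_n` the
Seifert matrix of `K_n`), viewed as a real matrix, is negative definite:
`xᵀ (A_n + A_nᵀ) x < 0` for every nonzero `x ∈ ℝ⁴`; equivalently,
`-(A_n + A_nᵀ)` is positive definite. -/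
theorem stmt_0 (n : ℤ) (hn : 1 ≤ n)
    (A : Matrix (Fin 4) (Fin 4) ℝ)
    (hA : A = !![-1 - (n : ℝ), -1 - (n : ℝ), 0, 0;
                 -(n : ℝ), -1 - (n : ℝ), 0, 0;
                 0, 0, -1, 0;
                 0, 0, -1, -1]) :
    (∀ x : Fin 4 → ℝ, x ≠ 0 → x ⬝ᵥ (A + Aᵀ).mulVec x < 0) ∧
      (-(A + Aᵀ)).PosDef := by
  have hA' : A = SevenThreeFamily.seifertMatrix n := hA
  have ht : (-1 : ℝ) ≤ 2 * n := by exact_mod_cast (by omega : -1 ≤ 2 * n)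
  have hneg (x : Fin 4 → ℝ) (hx : x ≠ 0) : x ⬝ᵥ (A + Aᵀ) *ᵥ x < 0 := by
    rw [hA']
    exact SevenThreeFamily.dotProduct_add_transpose_mulVec_neg ht hx
  exact ⟨hneg, posDef_neg_of_isSymm (isSymm_add_transpose_self A) hneg⟩
end

section
/- For every integer n ≥ 1, let A_n be the 4×4 matrix with rows (−1−n, −1−n, 0, 0), (−n, −1−n, 0, 0), (0, 0, −1, 0), (0, 0, −1, −1). Then every real eigenvalue of the real symmetric matrix A_n + A_nᵀ is strictly negative. -/
open Matrix

/-- For every integer `n ≥ 1`, every real eigenvalue of the real symmetric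
matrix `A_n + A_nᵀ` is strictly negative. -/
theorem stmt_2 (n : ℤ) (hn : 1 ≤ n)
    (A : Matrix (Fin 4) (Fin 4) ℝ)
    (hA : A = !![-1 - (n : ℝ), -1 - (n : ℝ), 0, 0;
                 -(n : ℝ), -1 - (n : ℝ), 0, 0;
                 0, 0, -1, 0;
                 0, 0, -1, -1]) :
    ∀ (μ : ℝ) (x : Fin 4 → ℝ), x ≠ 0 → (A + Aᵀ).mulVec x = μ • x → μ < 0 := by
  subst hA
  intro μ x hx hμ
  have hn' : (1:ℝ) ≤ (n:ℝ) := by exact_mod_cast hn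
  have e0 := congrFun hμ 0
  have e1 := congrFun hμ 1
  have e2 := congrFun hμ 2
  have e3 := congrFun hμ 3
  simp [mulVec, dotProduct, Fin.sum_univ_four, Matrix.add_apply,
    Matrix.transpose_apply, Matrix.cons_val', Matrix.cons_val_zero, Matrix.cons_val_one,
    Matrix.head_cons, Matrix.vecHead, Matrix.vecTail, Matrix.cons_val_fin_one,
    Matrix.empty_val', Matrix.cons_val_succ,
    Fin.isValue, Function.comp] at e0 e1 e2 e3
  set a := x 0; set b := x 1; set c := x 2; set d := x 3
  have h0 : a ≠ 0 ∨ b ≠ 0 ∨ c ≠ 0 ∨ d ≠ 0 := by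
    by_contra h
    push_neg at h
    obtain ⟨h1, h2, h3, h4⟩ := h
    exact hx (funext fun i => by fin_cases i <;> assumption)
  have hS : 0 < a^2 + b^2 + c^2 + d^2 := by
    rcases h0 with h | h | h | h <;> positivity
  have q0 := congrArg (· * a) e0
  have q1 := congrArg (· * b) e1
  have q2 := congrArg (· * c) e2
  have q3 := congrArg (· * d) e3
  nlinarith [q0, q1, q2, q3, sq_nonneg (a + b), sq_nonneg (c + d), hS,
    mul_nonneg (sub_nonneg.mpr hn') (sq_nonneg (a + b))]
end
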